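/- Let A (n×n), B (n×m), C (p×n), K̄, K̲ (m×n), L̄, L̲ (n×p), E (n×q) with E ≥ 0 entrywise, and F (p×r) be real matrices satisfying: A + B(K̄ + K̲), A − L̄C, and A − L̲C are Schur stable; A + B(K̄ + K̲) ≥ 0, A + BK̄ ≥ 0, BK̄ ≥ 0, A − L̄C ≥ 0, A − L̲C ≥ 0, BK̄ + L̲C ≥ 0; and L̄F𝟙 − E𝟙 ≥ 0, E𝟙 − L̲F𝟙 ≥ 0, L̲F𝟙 ≥ 0. Let G = [[A + B(K̄ + K̲), BK̄, −BK̲], [0, A − L̄C, 0], [0, 0, A − L̲C]], d = (E𝟙, L̄F𝟙 − E𝟙, E𝟙 − L̲F𝟙), and f(z) = Gz + d. Then the set X_e = {(x, ē, e̲) ∈ ℝ^{3n} : x ≥ 0, ē ≥ 0, 0 ≤ e̲ ≤ x} is invariant under f, and there exists X* ∈ X_e such that for every z₀ ∈ X_e the iterates f^t(z₀) converge to X*. -/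

import Mathlib

open Matrix Filter

/-- A real square matrix is Schur stable if its spectral radius (computed over ℂ) is
strictly less than one. -/
def IsSchur {ι : Type*} [Fintype ι] [DecidableEq ι] (M : Matrix ι ι ℝ) : Prop :=
  spectralRadius ℂ (M.map (algebraMap ℝ ℂ)) < 1

/-- The error-coordinate closed-loop map `(x, ē, e̲) ↦ G (x, ē, e̲)` with
`G = [[A + B(K̄ + K̲), BK̄, −BK̲], [0, A − L̄C, 0], [0, 0, A − L̲C]]`. -/
def Gmap {n m p : ℕ}
    (A : Matrix (Fin n) (Fin n) ℝ) (B : Matrix (Fin n) (Fin m) ℝ)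
    (C : Matrix (Fin p) (Fin n) ℝ)
    (Ku Kl : Matrix (Fin m) (Fin n) ℝ) (Lu Ll : Matrix (Fin n) (Fin p) ℝ)
    (z : (Fin n → ℝ) × (Fin n → ℝ) × (Fin n → ℝ)) :
    (Fin n → ℝ) × (Fin n → ℝ) × (Fin n → ℝ) :=
  ((A + B * (Ku + Kl)) *ᵥ z.1 + (B * Ku) *ᵥ z.2.1 - (B * Kl) *ᵥ z.2.2,
   (A - Lu * C) *ᵥ z.2.1,
   (A - Ll * C) *ᵥ z.2.2)

/-- The constant term `d = (E𝟙, L̄F𝟙 − E𝟙, E𝟙 − L̲F𝟙)` of the expected error dynamics. -/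
def noiseOffset {n p q r : ℕ}
    (Lu Ll : Matrix (Fin n) (Fin p) ℝ)
    (E : Matrix (Fin n) (Fin q) ℝ) (F : Matrix (Fin p) (Fin r) ℝ) :
    (Fin n → ℝ) × (Fin n → ℝ) × (Fin n → ℝ) :=
  (E *ᵥ (fun _ => (1 : ℝ)),
   (Lu * F) *ᵥ (fun _ => (1 : ℝ)) - E *ᵥ (fun _ => (1 : ℝ)),
   E *ᵥ (fun _ => (1 : ℝ)) - (Ll * F) *ᵥ (fun _ => (1 : ℝ)))

/-- The affine expected error dynamics `f(z) = Gz + d`. -/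
def noisyMap {n m p q r : ℕ}
    (A : Matrix (Fin n) (Fin n) ℝ) (B : Matrix (Fin n) (Fin m) ℝ)
    (C : Matrix (Fin p) (Fin n) ℝ)
    (Ku Kl : Matrix (Fin m) (Fin n) ℝ) (Lu Ll : Matrix (Fin n) (Fin p) ℝ)
    (E : Matrix (Fin n) (Fin q) ℝ) (F : Matrix (Fin p) (Fin r) ℝ)
    (z : (Fin n → ℝ) × (Fin n → ℝ) × (Fin n → ℝ)) :
    (Fin n → ℝ) × (Fin n → ℝ) × (Fin n → ℝ) :=
  Gmap A B C Ku Kl Lu Ll z + noiseOffset Lu Ll E F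

/-- The error cone `X_e = {(x, ē, e̲) : x ≥ 0, ē ≥ 0, 0 ≤ e̲ ≤ x entrywise}`. -/
def errorCone (n : ℕ) : Set ((Fin n → ℝ) × (Fin n → ℝ) × (Fin n → ℝ)) :=
  {z | (∀ i, 0 ≤ z.1 i) ∧ (∀ i, 0 ≤ z.2.1 i) ∧ (∀ i, 0 ≤ z.2.2 i) ∧
       (∀ i, z.2.2 i ≤ z.1 i)}

/-!
Invariance is a positivity computation: `ē⁺`, `e̲⁺` and `x⁺ - e̲⁺` are each a nonnegative matrix
applied to a nonnegative vector plus a nonnegative offset, the last one because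
`x⁺ - e̲⁺ = (A + B(K̄ + K̲))(x - e̲) + (BK̄ + L̲C)e̲ + BK̄ē + L̲F𝟙`.

Since `G` is block triangular, the iteration is a cascade: `ē` and `e̲` follow autonomous affine
recursions with Schur stable linear parts, and they drive the recursion for `x` through an input
that converges. By Gelfand's formula a Schur stable matrix has summable powers, and then
`x(t+1) = T x(t) + u(t)` with `u → L` converges to `∑ Tᵏ L`: apply Tannery's theorem to the
variation-of-constants formula. The limit lies in `X_e` because `X_e` is closed and contains the
orbit of `0`.
-/

open Topology

theorem summable_norm_pow_of_spectralRadius_lt_one {A : Type*} [NormedRing A] [NormedAlgebra ℂ A]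
    [CompleteSpace A] {a : A} (ha : spectralRadius ℂ a < 1) :
    Summable fun k : ℕ => ‖a ^ k‖ := by
  obtain ⟨r, hρr, hr1⟩ := ENNReal.lt_iff_exists_nnreal_btwn.mp ha
  have hr1' : (r : ℝ) < 1 := by exact_mod_cast hr1
  refine Summable.of_norm_bounded_eventually_nat
    (summable_geometric_of_lt_one r.coe_nonneg hr1') ?_
  filter_upwards [(spectrum.pow_nnnorm_pow_one_div_tendsto_nhds_spectralRadius a).eventually_lt_const
    hρr, eventually_gt_atTop 0] with k hk hk0
  rw [one_div, ENNReal.rpow_inv_lt_iff (by positivity), ENNReal.rpow_natCast] at hk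
  rw [norm_norm]
  exact_mod_cast hk.le

section LinftyOpNorm

attribute [local instance] Matrix.linftyOpSeminormedAddCommGroup Matrix.linftyOpNormedRing
  Matrix.linftyOpNormedAlgebra

theorem Matrix.linfty_opNorm_map_eq {m n α β : Type*} [Fintype m] [Fintype n]
    [SeminormedAddCommGroup α] [SeminormedAddCommGroup β] (A : Matrix m n α) (f : α → β)
    (hf : ∀ a, ‖f a‖₊ = ‖a‖₊) : ‖A.map f‖ = ‖A‖ := by
  simp only [Matrix.linfty_opNorm_def, Matrix.map_apply, hf]

theorem IsSchur.summable_norm_pow_mulVecLin {ι : Type*} [Fintype ι] [DecidableEq ι]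
    {M : Matrix ι ι ℝ} (hM : IsSchur M) :
    Summable fun k : ℕ => ‖(Matrix.mulVecLin M).toContinuousLinearMap ^ k‖ := by
  have hpow (k : ℕ) : (Matrix.mulVecLin M).toContinuousLinearMap ^ k =
      (Matrix.mulVecLin (M ^ k)).toContinuousLinearMap := by
    induction k with
    | zero => ext; simp
    | succ k ih => ext; simp [pow_succ, ih, Matrix.mulVec_mulVec]
  have hnorm (N : Matrix ι ι ℝ) : ‖(Matrix.mulVecLin N).toContinuousLinearMap‖ = ‖N‖ :=
    (Matrix.linfty_opNorm_eq_opNorm N).symm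
  have hmap (N : Matrix ι ι ℝ) : ‖N.map (algebraMap ℝ ℂ)‖ = ‖N‖ :=
    Matrix.linfty_opNorm_map_eq N _ fun a => by simp
  refine (summable_norm_pow_of_spectralRadius_lt_one hM).congr fun k => ?_
  rw [hpow, hnorm, ← hmap, Matrix.map_pow]

end LinftyOpNorm

theorem tendsto_of_affine_recursion {𝕜 E : Type*} [NontriviallyNormedField 𝕜]
    [NormedAddCommGroup E] [NormedSpace 𝕜 E] [CompleteSpace E] {T : E →L[𝕜] E}
    (hT : Summable fun k : ℕ => ‖T ^ k‖) {u : ℕ → E} {L : E} (hu : Tendsto u atTop (𝓝 L))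
    {x : ℕ → E} (hx : ∀ t, x (t + 1) = T (x t) + u t) :
    Tendsto x atTop (𝓝 (∑' k, (T ^ k) L)) := by
  have hformula (t : ℕ) :
      x t = (T ^ t) (x 0) + ∑ k ∈ Finset.range t, (T ^ k) (u (t - (k + 1))) := by
    induction t with
    | zero => simp
    | succ t ih =>
      rw [hx, ih, map_add, map_sum, Finset.sum_range_succ']
      simp only [← mul_apply_eq_comp, ← pow_succ', Nat.add_sub_add_right, pow_zero, zero_add,
        one_apply_eq_self, add_tsub_cancel_right]
      exact add_assoc _ _ _
  obtain ⟨C, hC⟩ := isBounded_iff_forall_norm_le.mp (Metric.isBounded_range_of_tendsto u hu)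
  have hfree : Tendsto (fun t => (T ^ t) (x 0)) atTop (𝓝 0) :=
    squeeze_zero_norm (fun t => (T ^ t).le_opNorm (x 0))
      (by simpa using hT.tendsto_atTop_zero.mul_const ‖x 0‖)
  have hforced : Tendsto (fun t => ∑ k ∈ Finset.range t, (T ^ k) (u (t - (k + 1)))) atTop
      (𝓝 (∑' k, (T ^ k) L)) := by
    simp_rw [fun t => sum_eq_tsum_indicator (fun k => (T ^ k) (u (t - (k + 1)))) (Finset.range t)]
    refine tendsto_tsum_of_dominated_convergence (hT.mul_right C) (fun k => ?_)
      (Eventually.of_forall fun t k => ?_)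
    · refine (((T ^ k).continuous.tendsto L).comp
        (hu.comp (tendsto_sub_atTop_nat (k + 1)))).congr' ?_
      filter_upwards [eventually_gt_atTop k] with t ht
      simp [ht]
    · by_cases hk : k < t
      · simpa [hk] using (T ^ k).le_opNorm_of_le (hC _ ⟨_, rfl⟩)
      · simpa [hk] using mul_nonneg (norm_nonneg _) ((norm_nonneg _).trans (hC _ ⟨0, rfl⟩))
  simpa using (hfree.add hforced).congr fun t => (hformula t).symm

theorem Matrix.mulVec_nonneg {m n R : Type*} [Fintype n] [Semiring R] [PartialOrder R]
    [IsOrderedRing R] {M : Matrix m n R} (hM : ∀ i j, 0 ≤ M i j) {v : n → R}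
    (hv : ∀ j, 0 ≤ v j) (i : m) : 0 ≤ (M *ᵥ v) i :=
  Finset.sum_nonneg fun j _ => mul_nonneg (hM i j) (hv j)

theorem isClosed_errorCone (n : ℕ) : IsClosed (errorCone n) := by
  simp only [errorCone, Set.ofPred_and, Set.ofPred_forall]
  refine .inter ?_ (.inter ?_ (.inter ?_ ?_)) <;>
    exact isClosed_iInter fun i => isClosed_le (by fun_prop) (by fun_prop)

theorem zero_mem_errorCone (n : ℕ) : 0 ∈ errorCone n :=
  ⟨fun _ => le_rfl, fun _ => le_rfl, fun _ => le_rfl, fun _ => le_rfl⟩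

section ErrorDynamics

variable {n m p q r : ℕ}
    (A : Matrix (Fin n) (Fin n) ℝ) (B : Matrix (Fin n) (Fin m) ℝ) (C : Matrix (Fin p) (Fin n) ℝ)
    (Ku Kl : Matrix (Fin m) (Fin n) ℝ) (Lu Ll : Matrix (Fin n) (Fin p) ℝ)
    (E : Matrix (Fin n) (Fin q) ℝ) (F : Matrix (Fin p) (Fin r) ℝ)

theorem noisyMap_fst (z : (Fin n → ℝ) × (Fin n → ℝ) × (Fin n → ℝ)) :
    (noisyMap A B C Ku Kl Lu Ll E F z).1 = (A + B * (Ku + Kl)) *ᵥ z.1 +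
      ((B * Ku) *ᵥ z.2.1 - (B * Kl) *ᵥ z.2.2 + E *ᵥ fun _ => 1) := by
  simp only [noisyMap, Gmap, noiseOffset, Prod.fst_add]
  abel

theorem noisyMap_fst_sub_snd_snd (z : (Fin n → ℝ) × (Fin n → ℝ) × (Fin n → ℝ)) :
    (noisyMap A B C Ku Kl Lu Ll E F z).1 - (noisyMap A B C Ku Kl Lu Ll E F z).2.2 =
      (A + B * (Ku + Kl)) *ᵥ (z.1 - z.2.2) + (B * Ku + Ll * C) *ᵥ z.2.2 + (B * Ku) *ᵥ z.2.1 +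
        (Ll * F) *ᵥ fun _ => 1 := by
  simp only [noisyMap, Gmap, noiseOffset, Prod.fst_add, Prod.snd_add, Matrix.mulVec_sub,
    Matrix.add_mulVec, Matrix.sub_mulVec, Matrix.mul_add]
  abel

theorem noisyMap_mapsTo_errorCone
    (h1 : ∀ i j, 0 ≤ (A + B * (Ku + Kl)) i j) (h3 : ∀ i j, 0 ≤ (B * Ku) i j)
    (h4 : ∀ i j, 0 ≤ (A - Lu * C) i j) (h5 : ∀ i j, 0 ≤ (A - Ll * C) i j)
    (h6 : ∀ i j, 0 ≤ (B * Ku + Ll * C) i j)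
    (h7 : ∀ i, 0 ≤ ((Lu * F) *ᵥ (fun _ => (1 : ℝ)) - E *ᵥ (fun _ => (1 : ℝ))) i)
    (h8 : ∀ i, 0 ≤ (E *ᵥ (fun _ => (1 : ℝ)) - (Ll * F) *ᵥ (fun _ => (1 : ℝ))) i)
    (h9 : ∀ i, 0 ≤ ((Ll * F) *ᵥ (fun _ => (1 : ℝ))) i) :
    Set.MapsTo (noisyMap A B C Ku Kl Lu Ll E F) (errorCone n) (errorCone n) := by
  rintro z ⟨-, hupper, hlower, hlower_le⟩
  have hupper' (i : Fin n) : 0 ≤ (noisyMap A B C Ku Kl Lu Ll E F z).2.1 i :=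
    add_nonneg (Matrix.mulVec_nonneg h4 hupper i) (h7 i)
  have hlower' (i : Fin n) : 0 ≤ (noisyMap A B C Ku Kl Lu Ll E F z).2.2 i :=
    add_nonneg (Matrix.mulVec_nonneg h5 hlower i) (h8 i)
  have hlower_le' (i : Fin n) :
      (noisyMap A B C Ku Kl Lu Ll E F z).2.2 i ≤ (noisyMap A B C Ku Kl Lu Ll E F z).1 i := by
    have hgap : 0 ≤ ((noisyMap A B C Ku Kl Lu Ll E F z).1 -
        (noisyMap A B C Ku Kl Lu Ll E F z).2.2) i := by
      rw [noisyMap_fst_sub_snd_snd]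
      exact add_nonneg (add_nonneg (add_nonneg
        (Matrix.mulVec_nonneg h1 (fun j => sub_nonneg.mpr (hlower_le j)) i)
        (Matrix.mulVec_nonneg h6 hlower i)) (Matrix.mulVec_nonneg h3 hupper i)) (h9 i)
    exact sub_nonneg.mp hgap
  exact ⟨fun i => (hlower' i).trans (hlower_le' i), hupper', hlower', hlower_le'⟩

theorem exists_tendsto_iterate_noisyMap (hS1 : IsSchur (A + B * (Ku + Kl)))
    (hS2 : IsSchur (A - Lu * C)) (hS3 : IsSchur (A - Ll * C)) :
    ∃ X, ∀ z₀, Tendsto (fun t => (noisyMap A B C Ku Kl Lu Ll E F)^[t] z₀) atTop (𝓝 X) := by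
  set f := noisyMap A B C Ku Kl Lu Ll E F
  let T (M : Matrix (Fin n) (Fin n) ℝ) := (Matrix.mulVecLin M).toContinuousLinearMap
  let Xu := ∑' k, (T (A - Lu * C) ^ k) ((Lu * F) *ᵥ (fun _ => 1) - E *ᵥ fun _ => 1)
  let Xl := ∑' k, (T (A - Ll * C) ^ k) (E *ᵥ (fun _ => 1) - (Ll * F) *ᵥ fun _ => 1)
  let Xx := ∑' k, (T (A + B * (Ku + Kl)) ^ k)
    ((B * Ku) *ᵥ Xu - (B * Kl) *ᵥ Xl + E *ᵥ fun _ => 1)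
  refine ⟨(Xx, Xu, Xl), fun z₀ => ?_⟩
  have hupper : Tendsto (fun t => (f^[t] z₀).2.1) atTop (𝓝 Xu) :=
    tendsto_of_affine_recursion hS2.summable_norm_pow_mulVecLin tendsto_const_nhds fun t => by
      rw [Function.iterate_succ_apply']; rfl
  have hlower : Tendsto (fun t => (f^[t] z₀).2.2) atTop (𝓝 Xl) :=
    tendsto_of_affine_recursion hS3.summable_norm_pow_mulVecLin tendsto_const_nhds fun t => by
      rw [Function.iterate_succ_apply']; rfl
  have hstate : Tendsto (fun t => (f^[t] z₀).1) atTop (𝓝 Xx) :=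
    tendsto_of_affine_recursion hS1.summable_norm_pow_mulVecLin
      (((((T (B * Ku)).continuous.tendsto Xu).comp hupper).sub
        (((T (B * Kl)).continuous.tendsto Xl).comp hlower)).add tendsto_const_nhds)
      fun t => by rw [Function.iterate_succ_apply', noisyMap_fst]; rfl
  exact hstate.prodMk_nhds (hupper.prodMk_nhds hlower)

end ErrorDynamics

theorem noisy_positive_observer_of_ineqs_general {n m p q r : ℕ}
    (A : Matrix (Fin n) (Fin n) ℝ) (B : Matrix (Fin n) (Fin m) ℝ)
    (C : Matrix (Fin p) (Fin n) ℝ)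
    (Ku Kl : Matrix (Fin m) (Fin n) ℝ) (Lu Ll : Matrix (Fin n) (Fin p) ℝ)
    (E : Matrix (Fin n) (Fin q) ℝ) (F : Matrix (Fin p) (Fin r) ℝ)
    (hS1 : IsSchur (A + B * (Ku + Kl))) (hS2 : IsSchur (A - Lu * C))
    (hS3 : IsSchur (A - Ll * C))
    (h1 : ∀ i j, 0 ≤ (A + B * (Ku + Kl)) i j)
    (h3 : ∀ i j, 0 ≤ (B * Ku) i j)
    (h4 : ∀ i j, 0 ≤ (A - Lu * C) i j)
    (h5 : ∀ i j, 0 ≤ (A - Ll * C) i j)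
    (h6 : ∀ i j, 0 ≤ (B * Ku + Ll * C) i j)
    (h7 : ∀ i, 0 ≤ ((Lu * F) *ᵥ (fun _ => (1 : ℝ)) - E *ᵥ (fun _ => (1 : ℝ))) i)
    (h8 : ∀ i, 0 ≤ (E *ᵥ (fun _ => (1 : ℝ)) - (Ll * F) *ᵥ (fun _ => (1 : ℝ))) i)
    (h9 : ∀ i, 0 ≤ ((Ll * F) *ᵥ (fun _ => (1 : ℝ))) i) :
    (∀ z ∈ errorCone n, noisyMap A B C Ku Kl Lu Ll E F z ∈ errorCone n) ∧
    ∃ Xstar ∈ errorCone n, ∀ z₀ ∈ errorCone n,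
      Tendsto (fun t => (noisyMap A B C Ku Kl Lu Ll E F)^[t] z₀) atTop (nhds Xstar) := by
  have hinv := noisyMap_mapsTo_errorCone A B C Ku Kl Lu Ll E F h1 h3 h4 h5 h6 h7 h8 h9
  obtain ⟨X, hX⟩ := exists_tendsto_iterate_noisyMap A B C Ku Kl Lu Ll E F hS1 hS2 hS3
  have hX_mem : X ∈ errorCone n :=
    (isClosed_errorCone n).mem_of_tendsto (hX 0)
      (Eventually.of_forall fun t => (hinv.iterate t) (zero_mem_errorCone n))
  exact ⟨hinv, X, hX_mem, fun z₀ _ => hX z₀⟩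

/-- **Sufficiency in Theorem 2.** Under Schur stability of the three diagonal blocks,
the six inequalities of Lemma 1, and the three noise inequalities, the cone `X_e` is
invariant under the affine expected error dynamics `f(z) = Gz + d`, and all iterates
started in `X_e` converge to a fixed point `X* ∈ X_e`. -/
theorem noisy_positive_observer_of_ineqs {n m p q r : ℕ}
    (A : Matrix (Fin n) (Fin n) ℝ) (B : Matrix (Fin n) (Fin m) ℝ)
    (C : Matrix (Fin p) (Fin n) ℝ)
    (Ku Kl : Matrix (Fin m) (Fin n) ℝ) (Lu Ll : Matrix (Fin n) (Fin p) ℝ)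
    (E : Matrix (Fin n) (Fin q) ℝ) (F : Matrix (Fin p) (Fin r) ℝ)
    (hE : ∀ i j, 0 ≤ E i j)
    (hS1 : IsSchur (A + B * (Ku + Kl))) (hS2 : IsSchur (A - Lu * C))
    (hS3 : IsSchur (A - Ll * C))
    (h1 : ∀ i j, 0 ≤ (A + B * (Ku + Kl)) i j)
    (h2 : ∀ i j, 0 ≤ (A + B * Ku) i j)
    (h3 : ∀ i j, 0 ≤ (B * Ku) i j)
    (h4 : ∀ i j, 0 ≤ (A - Lu * C) i j)
    (h5 : ∀ i j, 0 ≤ (A - Ll * C) i j)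
    (h6 : ∀ i j, 0 ≤ (B * Ku + Ll * C) i j)
    (h7 : ∀ i, 0 ≤ ((Lu * F) *ᵥ (fun _ => (1 : ℝ)) - E *ᵥ (fun _ => (1 : ℝ))) i)
    (h8 : ∀ i, 0 ≤ (E *ᵥ (fun _ => (1 : ℝ)) - (Ll * F) *ᵥ (fun _ => (1 : ℝ))) i)
    (h9 : ∀ i, 0 ≤ ((Ll * F) *ᵥ (fun _ => (1 : ℝ))) i) :
    (∀ z ∈ errorCone n, noisyMap A B C Ku Kl Lu Ll E F z ∈ errorCone n) ∧
    ∃ Xstar ∈ errorCone n, ∀ z₀ ∈ errorCone n,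
      Tendsto (fun t => (noisyMap A B C Ku Kl Lu Ll E F)^[t] z₀) atTop (nhds Xstar) :=
  noisy_positive_observer_of_ineqs_general A B C Ku Kl Lu Ll E F hS1 hS2 hS3 h1 h3 h4 h5 h6 h7 h8 h9
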